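/- arXiv:2307.00779 — 2 statements merged into one kernel-verified Lean document; each statement's English description precedes it below -/
import Mathlib

section
/- Let φ: ℝ₊ⁿ → ℝ ∪ {∞} be a concave and non-decreasing function, and define its transform φ*(λ) = sup_{x ∈ ℝ₊ⁿ} {φ(x) − ⟨λ, x⟩} for λ ∈ ℝ₊ⁿ. Then for all x in the strictly positive orthant ℝ₊₊ⁿ, one has φ(x) = inf_{λ ∈ ℝ₊ⁿ} {⟨λ, x⟩ + φ*(λ)}. -/
open scoped BigOperators

open Set

private lemma ereal_le_add_sub (a : EReal) (r : ℝ) (ha : a ≠ ⊥) :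
    a ≤ (r : EReal) + (a - r) := by
  induction a using EReal.rec with
  | bot => simp at ha
  | coe a =>
    rw [← EReal.coe_sub, ← EReal.coe_add]
    exact EReal.coe_le_coe_iff.mpr (by ring_nf; exact le_rfl)
  | top => rw [EReal.top_sub_coe, EReal.coe_add_top]

private lemma ereal_coe_mul_ne_bot (c : ℝ) (hc : 0 < c) (a : EReal) (ha : a ≠ ⊥) :
    (c : EReal) * a ≠ ⊥ := by
  induction a using EReal.rec with
  | bot => simp at ha
  | coe a => rw [← EReal.coe_mul]; exact EReal.coe_ne_bot _
  | top => rw [EReal.coe_mul_top_of_pos hc]; exact top_ne_bot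

/-- Legendre-type duality for concave, non-decreasing `EReal`-valued functions on the
nonnegative orthant: for every `x` in the strictly positive orthant,
`φ x = ⨅_{λ ≥ 0} (⟨λ, x⟩ + φ*(λ))` where `φ*(λ) = ⨆_{y ≥ 0} (φ y − ⟨λ, y⟩)`. -/
theorem legendre_transform_concave (n : ℕ) (φ : (Fin n → ℝ) → EReal)
    (hne_bot : ∀ x : Fin n → ℝ, (∀ i, 0 ≤ x i) → φ x ≠ ⊥)
    (hmono : ∀ x y : Fin n → ℝ, (∀ i, 0 ≤ x i) → (∀ i, x i ≤ y i) → φ x ≤ φ y)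
    (hconc : ∀ x y : Fin n → ℝ, (∀ i, 0 ≤ x i) → (∀ i, 0 ≤ y i) →
      ∀ t : ℝ, 0 ≤ t → t ≤ 1 →
        (t : EReal) * φ x + ((1 - t : ℝ) : EReal) * φ y ≤ φ (t • x + (1 - t) • y))
    (x : Fin n → ℝ) (hx : ∀ i, 0 < x i) :
    φ x = ⨅ (l : Fin n → ℝ) (_ : ∀ i, 0 ≤ l i),
      (((∑ i, l i * x i : ℝ) : EReal) +
        ⨆ (y : Fin n → ℝ) (_ : ∀ i, 0 ≤ y i),
          (φ y - ((∑ i, l i * y i : ℝ) : EReal))) := by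
  classical
  have hxS : ∀ i, 0 ≤ x i := fun i => (hx i).le
  refine le_antisymm ?_ ?_
  · -- easy direction
    refine le_iInf fun l => le_iInf fun hl => ?_
    have h1 : φ x - ((∑ i, l i * x i : ℝ) : EReal) ≤
        ⨆ (y : Fin n → ℝ) (_ : ∀ i, 0 ≤ y i), (φ y - ((∑ i, l i * y i : ℝ) : EReal)) :=
      le_iSup₂ (f := fun (y : Fin n → ℝ) (_ : ∀ i, 0 ≤ y i) =>
        φ y - ((∑ i, l i * y i : ℝ) : EReal)) x hxS
    refine le_trans (ereal_le_add_sub (φ x) (∑ i, l i * x i) (hne_bot x hxS)) ?_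
    exact add_le_add le_rfl h1
  · -- hard direction
    rcases eq_or_ne (φ x) ⊤ with htop | htop
    · rw [htop]; exact le_top
    -- φ is finite everywhere on the orthant
    have hfin : ∀ y : Fin n → ℝ, (∀ i, 0 ≤ y i) → φ y ≠ ⊤ := by
      intro y hy hyt
      apply htop
      have hev : ∀ᶠ t in nhdsWithin (0:ℝ) (Set.Ioi 0),
          ((∀ i, t * y i < x i) ∧ t < 1) ∧ t ∈ Set.Ioi (0:ℝ) := by
        refine Filter.Eventually.and (Filter.Eventually.and ?_ ?_) eventually_mem_nhdsWithin
        · rw [Filter.eventually_all]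
          intro i
          have ht : Filter.Tendsto (fun t : ℝ => t * y i) (nhdsWithin 0 (Set.Ioi 0)) (nhds 0) := by
            have h0 : Filter.Tendsto (fun t : ℝ => t * y i) (nhds (0:ℝ)) (nhds (0 * y i)) :=
              (continuous_mul_right (y i)).tendsto 0
            rw [zero_mul] at h0
            exact h0.mono_left nhdsWithin_le_nhds
          exact ht.eventually_lt_const (hx i)
        · have ht : Filter.Tendsto (fun t : ℝ => t) (nhdsWithin (0:ℝ) (Set.Ioi 0)) (nhds 0) :=
            Filter.tendsto_id.mono_left nhdsWithin_le_nhds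
          exact ht.eventually_lt_const one_pos
      obtain ⟨t, ⟨hty, ht1⟩, ht0⟩ := hev.exists
      rw [Set.mem_Ioi] at ht0
      have h1t : 0 < 1 - t := by linarith
      set z : Fin n → ℝ := (1 - t)⁻¹ • (x - t • y) with hzdef
      have hzS : ∀ i, 0 ≤ z i := by
        intro i
        have h2 : 0 ≤ x i - t * y i := by linarith [hty i]
        have : z i = (1 - t)⁻¹ * (x i - t * y i) := by
          simp [hzdef, smul_eq_mul]
        rw [this]
        positivity
      have hcomb : t • y + (1 - t) • z = x := by
        funext i
        simp only [hzdef, Pi.add_apply, Pi.smul_apply, Pi.sub_apply, smul_eq_mul]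
        field_simp
        ring
      have h := hconc y z hy hzS t ht0.le ht1.le
      rw [hcomb, hyt] at h
      rw [EReal.mul_top_of_pos (by exact_mod_cast ht0 : (0:EReal) < (t:EReal))] at h
      rw [EReal.top_add_of_ne_bot (ereal_coe_mul_ne_bot (1 - t) h1t _ (hne_bot z hzS))] at h
      exact top_le_iff.mp h
    -- real-valued version
    set f : (Fin n → ℝ) → ℝ := fun y => (φ y).toReal with hfdef
    have hcoe : ∀ y : Fin n → ℝ, (∀ i, 0 ≤ y i) → φ y = (f y : EReal) := fun y hy =>
      (EReal.coe_toReal (hfin y hy) (hne_bot y hy)).symm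
    have hfmono : ∀ y y' : Fin n → ℝ, (∀ i, 0 ≤ y i) → (∀ i, y i ≤ y' i) → f y ≤ f y' := by
      intro y y' hy hle
      have hy' : ∀ i, 0 ≤ y' i := fun i => le_trans (hy i) (hle i)
      have h := hmono y y' hy hle
      rw [hcoe y hy, hcoe y' hy'] at h
      exact EReal.coe_le_coe_iff.mp h
    set U : Set (Fin n → ℝ) := {y | ∀ i, 0 < y i} with hUdef
    have hUopen : IsOpen U := by
      have : U = ⋂ i, (fun y : Fin n → ℝ => y i) ⁻¹' (Set.Ioi 0) := by
        ext y; simp [hUdef]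
      rw [this]
      exact isOpen_iInter_of_finite fun i => (isOpen_Ioi).preimage (continuous_apply i)
    have hUconv : Convex ℝ U := by
      have : U = ⋂ i, (LinearMap.proj (R := ℝ) (φ := fun _ : Fin n => ℝ) i) ⁻¹' (Set.Ioi 0) := by
        ext y; simp [hUdef]
      rw [this]
      exact convex_iInter fun i => (convex_Ioi (0:ℝ)).linear_preimage _
    have hconcR : ConcaveOn ℝ U f := by
      refine ⟨hUconv, ?_⟩
      intro y hy z hz a b ha hb hab
      have hb' : b = 1 - a := by linarith
      subst hb'
      have ha1 : a ≤ 1 := by linarith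
      have hyS : ∀ i, 0 ≤ y i := fun i => (hy i).le
      have hzS : ∀ i, 0 ≤ z i := fun i => (hz i).le
      have hcS : ∀ i, 0 ≤ (a • y + (1 - a) • z) i := by
        intro i
        simp only [Pi.add_apply, Pi.smul_apply, smul_eq_mul]
        exact add_nonneg (mul_nonneg ha (hyS i)) (mul_nonneg hb (hzS i))
      have h := hconc y z hyS hzS a ha ha1
      rw [hcoe y hyS, hcoe z hzS, hcoe _ hcS, ← EReal.coe_mul, ← EReal.coe_mul,
        ← EReal.coe_add, EReal.coe_le_coe_iff] at h
      simpa [smul_eq_mul] using h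
    set D : Set ((Fin n → ℝ) × ℝ) := {p | p.1 ∈ U ∧ p.2 < f p.1} with hDdef
    have hDopen : IsOpen D := by
      have hcont : ContinuousOn (fun p : (Fin n → ℝ) × ℝ => f p.1 - p.2)
          (U ×ˢ (Set.univ : Set ℝ)) :=
        ((hconcR.continuousOn hUopen).comp continuousOn_fst (fun p hp => hp.1)).sub
          continuousOn_snd
      have hDeq : D = (U ×ˢ (Set.univ : Set ℝ)) ∩
          (fun p : (Fin n → ℝ) × ℝ => f p.1 - p.2) ⁻¹' (Set.Ioi 0) := by
        ext p
        simp only [hDdef, Set.mem_setOf_eq, Set.mem_inter_iff, Set.mem_prod, Set.mem_univ,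
          and_true, Set.mem_preimage, Set.mem_Ioi, sub_pos]
      rw [hDeq]
      exact hcont.isOpen_inter_preimage (hUopen.prod isOpen_univ) isOpen_Ioi
    have hDconv : Convex ℝ D := by
      rintro ⟨y, s⟩ ⟨hy, hs⟩ ⟨z, t⟩ ⟨hz, ht⟩ a b ha hb hab
      refine ⟨hUconv hy hz ha hb hab, ?_⟩
      have hconc2 := hconcR.2 hy hz ha hb hab
      simp only [smul_eq_mul] at hconc2
      have hstrict : a * s + b * t < a * f y + b * f z := by
        rcases eq_or_lt_of_le ha with rfl | ha'
        · have hb1 : b = 1 := by linarith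
          simp only [zero_mul, zero_add, hb1, one_mul]
          exact ht
        · exact add_lt_add_of_lt_of_le (mul_lt_mul_of_pos_left hs ha')
            (mul_le_mul_of_nonneg_left ht.le hb)
      have : (a • ((y, s) : (Fin n → ℝ) × ℝ) + b • (z, t)).2 <
          f ((a • ((y, s) : (Fin n → ℝ) × ℝ) + b • (z, t)).1) := by
        simp only [Prod.smul_mk, Prod.mk_add_mk, smul_eq_mul]
        exact lt_of_lt_of_le hstrict hconc2
      exact this
    -- main argument: by contradiction using density
    by_contra hlt
    push_neg at hlt
    obtain ⟨c, hc1, hc2⟩ := exists_between hlt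
    have hcne_top : c ≠ ⊤ := by
      intro h; rw [h] at hc2; exact (not_top_lt hc2).elim
    have hcne_bot : c ≠ ⊥ := by
      intro h; rw [h] at hc1; exact (not_lt_bot hc1).elim
    set m : ℝ := c.toReal with hmdef
    have hcm : c = (m : EReal) := (EReal.coe_toReal hcne_top hcne_bot).symm
    have hm : f x < m := by
      rw [hcoe x hxS, hcm] at hc1
      exact EReal.coe_lt_coe_iff.mp hc1
    -- separation
    have hxmD : ((x, m) : (Fin n → ℝ) × ℝ) ∉ D := by
      intro h
      exact absurd h.2 (not_lt.mpr hm.le)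
    obtain ⟨F, hF⟩ := geometric_hahn_banach_open_point hDconv hDopen hxmD
    set c0 : ℝ := F ((0 : Fin n → ℝ), (1 : ℝ)) with hc0def
    have hsplit : ∀ (y : Fin n → ℝ) (t : ℝ), F (y, t) = F (y, 0) + t * c0 := by
      intro y t
      have h : ((y, t) : (Fin n → ℝ) × ℝ) = (y, 0) + t • ((0 : Fin n → ℝ), (1 : ℝ)) := by
        simp [Prod.ext_iff]
      rw [h, map_add, map_smul, smul_eq_mul]
    have hineq : ∀ (y : Fin n → ℝ) (t : ℝ), (∀ i, 0 < y i) → t < f y →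
        F (y, 0) + t * c0 < F (x, 0) + m * c0 := by
      intro y t hy ht
      have h0 := hF (y, t) ⟨hy, ht⟩
      rw [hsplit y t, hsplit x m] at h0
      exact h0
    have hc0pos : 0 < c0 := by
      rcases lt_trichotomy c0 0 with h | h | h
      · have h1 := hineq x (f x - 1) hx (by linarith)
        nlinarith
      · have h1 := hineq x (f x - 1) hx (by linarith)
        rw [h] at h1
        simp at h1
      · exact h
    set g : Fin n → ℝ := fun i => F ((fun j => if i = j then (1:ℝ) else 0), 0) with hgdef
    have hFdec : ∀ y : Fin n → ℝ, F (y, 0) = ∑ i, y i * g i := by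
      intro y
      have hL : F (y, 0) =
          (F.toLinearMap.comp (LinearMap.inl ℝ (Fin n → ℝ) ℝ)) y := by simp
      rw [hL, LinearMap.pi_apply_eq_sum_univ]
      refine Finset.sum_congr rfl fun i _ => ?_
      simp [hgdef, smul_eq_mul]
    have hlin : ∀ (y : Fin n → ℝ) (s : ℝ) (e : Fin n → ℝ),
        F (y + s • e, 0) = F (y, 0) + s * F (e, 0) := by
      intro y s e
      have h : ((y + s • e, 0) : (Fin n → ℝ) × ℝ) = (y, 0) + s • (e, 0) := by
        simp [Prod.ext_iff]
      rw [h, map_add, map_smul, smul_eq_mul]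
    have hgnonpos : ∀ i, g i ≤ 0 := by
      intro i
      by_contra hgi
      push_neg at hgi
      set e : Fin n → ℝ := fun j => if i = j then (1:ℝ) else 0 with hedef
      have hB : 0 < (m - f x + 1) * c0 + 1 := by nlinarith
      set s : ℝ := ((m - f x + 1) * c0 + 1) / g i with hsdef
      have hs : 0 < s := div_pos hB hgi
      have hyU : ∀ j, 0 < (x + s • e) j := by
        intro j
        simp only [Pi.add_apply, Pi.smul_apply, hedef, smul_eq_mul]
        by_cases hij : i = j
        · simp [hij]; linarith [hx j]
        · simp [hij]; exact hx j
      have hfxe : f x - 1 < f (x + s • e) := by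
        have hle : f x ≤ f (x + s • e) := by
          refine hfmono x _ hxS fun j => ?_
          simp only [Pi.add_apply, Pi.smul_apply, hedef, smul_eq_mul]
          by_cases hij : i = j
          · simp [hij]; linarith
          · simp [hij]
        linarith
      have h1 := hineq _ (f x - 1) hyU hfxe
      rw [hlin x s e] at h1
      have hge : F (e, 0) = g i := by rw [hgdef]
      rw [hge] at h1
      have hsg : s * g i = (m - f x + 1) * c0 + 1 := by
        rw [hsdef]; field_simp
      nlinarith
    set l : Fin n → ℝ := fun i => -g i / c0 with hldef
    have hl : ∀ i, 0 ≤ l i := fun i =>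
      div_nonneg (neg_nonneg.mpr (hgnonpos i)) hc0pos.le
    have hFl : ∀ y : Fin n → ℝ, F (y, 0) = -(∑ i, l i * y i) * c0 := by
      intro y
      rw [hFdec]
      have heach : ∀ i, y i * g i = (l i * y i) * (-c0) := by
        intro i
        simp only [hldef]
        field_simp
      rw [Finset.sum_congr rfl (fun i _ => heach i), ← Finset.sum_mul]
      ring
    have hlxnn : 0 ≤ ∑ i, l i * x i :=
      Finset.sum_nonneg fun i _ => mul_nonneg (hl i) (hxS i)
    -- key bound on U
    have hkeyU : ∀ y : Fin n → ℝ, (∀ i, 0 < y i) →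
        f y ≤ m - (∑ i, l i * x i) + ∑ i, l i * y i := by
      intro y hy
      by_contra hcon
      push_neg at hcon
      set B : ℝ := m - (∑ i, l i * x i) + ∑ i, l i * y i with hBdef
      have hBfy : B < f y := hcon
      have h1 := hineq y ((B + f y) / 2) hy (by linarith)
      rw [hFl y, hFl x] at h1
      nlinarith
    -- extend to the closed orthant
    have hkey : ∀ y : Fin n → ℝ, (∀ i, 0 ≤ y i) →
        f y ≤ m - (∑ i, l i * x i) + ∑ i, l i * y i := by
      intro y hy
      have haux : ∀ ε : ℝ, 0 < ε →
          f y ≤ m - (∑ i, l i * x i) + (∑ i, l i * y i) + ε * (∑ i, l i * x i) := by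
        intro ε hε
        have hyU : ∀ i, 0 < (y + ε • x) i := by
          intro i
          simp only [Pi.add_apply, Pi.smul_apply, smul_eq_mul]
          have := hx i
          have := hy i
          positivity
        have h1 : f y ≤ f (y + ε • x) := by
          refine hfmono y _ hy fun i => ?_
          simp only [Pi.add_apply, Pi.smul_apply, smul_eq_mul]
          nlinarith [hx i]
        have h2 := hkeyU _ hyU
        have h3 : ∑ i, l i * (y + ε • x) i = (∑ i, l i * y i) + ε * ∑ i, l i * x i := by
          rw [Finset.mul_sum, ← Finset.sum_add_distrib]
          refine Finset.sum_congr rfl fun i _ => ?_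
          simp only [Pi.add_apply, Pi.smul_apply, smul_eq_mul]
          ring
        rw [h3] at h2
        linarith
      by_contra hcon
      push_neg at hcon
      set C : ℝ := m - (∑ i, l i * x i) + ∑ i, l i * y i with hCdef
      set δ : ℝ := f y - C with hδdef
      have hδ : 0 < δ := by simp only [hδdef]; linarith
      have hε : 0 < δ / (2 * ((∑ i, l i * x i) + 1)) := by positivity
      have h := haux _ hε
      have hbound : δ / (2 * ((∑ i, l i * x i) + 1)) * (∑ i, l i * x i) ≤ δ / 2 := by
        rw [div_mul_eq_mul_div, div_le_div_iff₀ (by positivity) (by norm_num)]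
        nlinarith
      linarith
    -- conclude
    have hfinal : (⨅ (l' : Fin n → ℝ) (_ : ∀ i, 0 ≤ l' i),
        (((∑ i, l' i * x i : ℝ) : EReal) +
          ⨆ (y : Fin n → ℝ) (_ : ∀ i, 0 ≤ y i),
            (φ y - ((∑ i, l' i * y i : ℝ) : EReal)))) ≤ (m : EReal) := by
      refine le_trans (iInf₂_le l hl) ?_
      have hsup : (⨆ (y : Fin n → ℝ) (_ : ∀ i, 0 ≤ y i),
          (φ y - ((∑ i, l i * y i : ℝ) : EReal))) ≤
          ((m - (∑ i, l i * x i) : ℝ) : EReal) := by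
        refine iSup₂_le fun y hy => ?_
        rw [hcoe y hy, ← EReal.coe_sub, EReal.coe_le_coe_iff]
        linarith [hkey y hy]
      calc ((∑ i, l i * x i : ℝ) : EReal) +
            (⨆ (y : Fin n → ℝ) (_ : ∀ i, 0 ≤ y i),
              (φ y - ((∑ i, l i * y i : ℝ) : EReal)))
          ≤ ((∑ i, l i * x i : ℝ) : EReal) + ((m - (∑ i, l i * x i) : ℝ) : EReal) :=
            add_le_add le_rfl hsup
        _ = (m : EReal) := by rw [← EReal.coe_add]; norm_num
    rw [hcm] at hc2
    exact absurd (lt_of_le_of_lt hfinal hc2) (lt_irrefl _)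
end

section
/- Fix z ∈ ℝ and λ₁, λ₂ > 0. For real numbers s₁, s₂ with s₁ + s₂ > z, the value of sup over (s₁', s₂') ∈ ℝ² of [𝟙{s₁' + s₂' ≤ z} − λ₁|s₁ − s₁'|² − λ₂|s₂ − s₂'|²] equals max{0, 1 − λ₁λ₂(s₁ + s₂ − z)²/(λ₁ + λ₂)}; and for s₁ + s₂ ≤ z the supremum equals 1. -/
/-- For `λ₁, λ₂ > 0` and `z ∈ ℝ`:
if `s₁ + s₂ > z` then
`sup_{(s₁',s₂')} [𝟙{s₁'+s₂' ≤ z} − λ₁|s₁−s₁'|² − λ₂|s₂−s₂'|²]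
  = max {0, 1 − λ₁λ₂(s₁+s₂−z)²/(λ₁+λ₂)}`,
and if `s₁ + s₂ ≤ z` the supremum equals `1`. -/
theorem sup_indicator_quadratic (z s₁ s₂ l₁ l₂ : ℝ) (h₁ : 0 < l₁) (h₂ : 0 < l₂) :
    (s₁ + s₂ > z →
      (⨆ p : ℝ × ℝ, ((if p.1 + p.2 ≤ z then (1 : ℝ) else 0)
          - l₁ * (s₁ - p.1) ^ 2 - l₂ * (s₂ - p.2) ^ 2))
        = max 0 (1 - l₁ * l₂ * (s₁ + s₂ - z) ^ 2 / (l₁ + l₂))) ∧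
    (s₁ + s₂ ≤ z →
      (⨆ p : ℝ × ℝ, ((if p.1 + p.2 ≤ z then (1 : ℝ) else 0)
          - l₁ * (s₁ - p.1) ^ 2 - l₂ * (s₂ - p.2) ^ 2)) = 1) := by
  have hl12 : 0 < l₁ + l₂ := by linarith
  set f : ℝ × ℝ → ℝ := fun p => ((if p.1 + p.2 ≤ z then (1 : ℝ) else 0)
      - l₁ * (s₁ - p.1) ^ 2 - l₂ * (s₂ - p.2) ^ 2) with hf
  have hb : BddAbove (Set.range f) := by
    refine ⟨1, ?_⟩
    rintro x ⟨p, rfl⟩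
    simp only [hf]
    have q1 : 0 ≤ l₁ * (s₁ - p.1) ^ 2 := mul_nonneg h₁.le (sq_nonneg _)
    have q2 : 0 ≤ l₂ * (s₂ - p.2) ^ 2 := mul_nonneg h₂.le (sq_nonneg _)
    split <;> linarith
  constructor
  · intro hz
    apply le_antisymm
    · apply ciSup_le
      intro p
      simp only [hf]
      have q1 : 0 ≤ l₁ * (s₁ - p.1) ^ 2 := mul_nonneg h₁.le (sq_nonneg _)
      have q2 : 0 ≤ l₂ * (s₂ - p.2) ^ 2 := mul_nonneg h₂.le (sq_nonneg _)
      rcases le_or_gt (p.1 + p.2) z with h | h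
      · rw [if_pos h]
        refine le_trans ?_ (le_max_right _ _)
        rw [sub_sub, sub_le_sub_iff_left, div_le_iff₀ hl12]
        have hab : s₁ + s₂ - z ≤ (s₁ - p.1) + (s₂ - p.2) := by linarith
        have hd : 0 < s₁ + s₂ - z := by linarith
        nlinarith [sq_nonneg (l₁ * (s₁ - p.1) - l₂ * (s₂ - p.2)), mul_pos h₁ h₂,
          mul_nonneg (by linarith : (0:ℝ) ≤ (s₁ - p.1) + (s₂ - p.2) - (s₁ + s₂ - z))
            (by linarith : (0:ℝ) ≤ (s₁ - p.1) + (s₂ - p.2) + (s₁ + s₂ - z))]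
      · rw [if_neg (not_le.mpr h)]
        refine le_trans ?_ (le_max_left _ _)
        linarith
    · apply max_le
      · have := le_ciSup hb (s₁, s₂)
        simp only [hf, if_neg (not_le.mpr hz)] at this
        simpa using this
      · have := le_ciSup hb (s₁ - l₂ * (s₁ + s₂ - z) / (l₁ + l₂),
          s₂ - l₁ * (s₁ + s₂ - z) / (l₁ + l₂))
        simp only [hf] at this
        have hc : s₁ - l₂ * (s₁ + s₂ - z) / (l₁ + l₂) + (s₂ - l₁ * (s₁ + s₂ - z) / (l₁ + l₂)) = z := by
          field_simp
          ring
        rw [if_pos hc.le] at this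
        refine le_trans (le_of_eq ?_) this
        field_simp
        ring
  · intro hz
    apply le_antisymm
    · apply ciSup_le
      intro p
      simp only [hf]
      have q1 : 0 ≤ l₁ * (s₁ - p.1) ^ 2 := mul_nonneg h₁.le (sq_nonneg _)
      have q2 : 0 ≤ l₂ * (s₂ - p.2) ^ 2 := mul_nonneg h₂.le (sq_nonneg _)
      split <;> linarith
    · have := le_ciSup hb (s₁, s₂)
      simp only [hf, if_pos hz] at this
      simpa using this
end
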